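/- In a rooted ordered tree, consider the modified DFS traversal Trav in which each leaf is visited twice consecutively (via a self-loop) and each internal vertex is visited twice (first visit before descending to its first child, second visit before moving to its next brother or parent). Then for every vertex v, the number of vertex-visits occurring strictly before the first visit to v is even if and only if the depth (level) of v is even. -/

import Mathlib

/-!
Every subtraversal `trav t p` has even length, since every vertex is visited exactly twice.
So the first visit to a vertex `a` is preceded by an even number of visits in the subtraversals of
its elder brothers and of the elder brothers of its ancestors, plus one visit to each proper
ancestor of `a`; the latter are `a.length` many.
-/

/-- A finite rooted ordered tree: a root with an ordered list of subtrees. -/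
inductive OTree : Type where
  | node : List OTree → OTree

mutual
/-- The visit sequence of the traversal `Trav` of the subtree rooted at the
vertex with address `a` (addresses are lists of child indices from the root;
the depth of a vertex is the length of its address).  A leaf is visited twice
consecutively (via its self-loop); an internal vertex is visited once before
descending to its first child and a second time after the second visit to its
last child (i.e. on moving back to the parent). -/
def trav : OTree → List ℕ → List (List ℕ)
  | .node [], a => [a, a]
  | .node (t :: ts), a => a :: (travList (t :: ts) a 0 ++ [a])

def travList : List OTree → List ℕ → ℕ → List (List ℕ)
  | [], _, _ => []
  | t :: ts, a, i => trav t (a ++ [i]) ++ travList ts a (i + 1)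
end

mutual
theorem even_length_trav (t : OTree) (p : List ℕ) : Even (trav t p).length := by
  match t with
  | .node [] => simp [trav]
  | .node (s :: ss) =>
    simpa [trav, parity_simps] using even_length_travList (s :: ss) p 0

theorem even_length_travList (ts : List OTree) (p : List ℕ) (i : ℕ) :
    Even (travList ts p i).length := by
  match ts with
  | [] => simp [travList]
  | t :: ts =>
    rw [travList, List.length_append]
    exact (even_length_trav t (p ++ [i])).add (even_length_travList ts p (i + 1))
end

mutual
theorem even_idxOf_trav_add_iff (t : OTree) (p a : List ℕ) (ha : a ∈ trav t p) :
    Even ((trav t p).idxOf a + p.length) ↔ Even a.length := by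
  match t with
  | .node [] =>
    obtain rfl : a = p := by simpa [trav] using ha
    simp [trav]
  | .node (s :: ss) =>
    by_cases hap : p = a
    · subst hap
      simp [trav]
    · have ha' : a ∈ travList (s :: ss) p 0 := by
        simpa [trav, Ne.symm hap] using ha
      rw [trav, List.idxOf_cons_ne _ hap, List.idxOf_append_of_mem ha', Nat.succ_eq_add_one,
        add_right_comm]
      exact even_idxOf_travList_add_iff (s :: ss) p 0 a ha'

theorem even_idxOf_travList_add_iff (ts : List OTree) (p : List ℕ) (i : ℕ) (a : List ℕ)
    (ha : a ∈ travList ts p i) :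
    Even ((travList ts p i).idxOf a + p.length + 1) ↔ Even a.length := by
  match ts with
  | [] => simp [travList] at ha
  | t :: ts =>
    rw [travList]
    by_cases hmem : a ∈ trav t (p ++ [i])
    · rw [List.idxOf_append_of_mem hmem, add_assoc]
      simpa using even_idxOf_trav_add_iff t (p ++ [i]) a hmem
    · have ha' : a ∈ travList ts p (i + 1) := by
        simpa [travList, hmem] using ha
      rw [List.idxOf_append_of_notMem hmem, add_assoc, add_assoc, ← add_assoc _ p.length,
        Nat.even_add, iff_true_left (even_length_trav t (p ++ [i]))]
      exact even_idxOf_travList_add_iff ts p (i + 1) a ha'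
end

/-- In the traversal `Trav` of a rooted ordered tree, for every vertex `v`
(identified by its address `a`), the number `ν_v⁽¹⁾` of visits strictly before
the first visit to `v` is even iff the depth of `v` is even. -/
theorem trav_first_visit_parity (t : OTree) (a : List ℕ) (ha : a ∈ trav t []) :
    Even ((trav t []).idxOf a) ↔ Even a.length := by
  simpa using even_idxOf_trav_add_iff t [] a ha
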